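/- Suppose the stochastic kernel R′(dy|z,a) on Y given P(X)×A is setwise continuous and H is a stochastic kernel on X given P(X)×A×Y satisfying the disintegration identity (3.4) and Assumption (H). Then the stochastic kernel q on P(X) given P(X)×A, defined by q(D|z,a) = ∫_Y 1{H(z,a,y) ∈ D} R′(dy|z,a) for Borel D ⊆ P(X), is weakly continuous: whenever z⁽ⁿ⁾ → z weakly and a⁽ⁿ⁾ → a, q(·|z⁽ⁿ⁾,a⁽ⁿ⁾) → q(·|z,a) weakly in P(P(X)). -/

import Mathlib

/-!
Fix `f` bounded continuous on `P(X)`; then `∫ f dq(·|z,a) = ∫ f (H(z,a,y)) R'(dy|z,a)`.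
It suffices that every subsequence has a further subsequence along which these integrals
converge. Assumption (H) supplies one along which the integrands converge `R'(·|z,a)`-a.e.
By Egorov's theorem they converge uniformly off a set of small `R'(·|z,a)`-measure, which by
setwise continuity is also small for `R'(·|zₙ,aₙ)`; and setwise convergence alone passes to
integrals of bounded measurable functions (layer cake formula and dominated convergence).
-/

open MeasureTheory Filter Topology
open scoped ENNReal NNReal

/-- The joint kernel `R(B×C|z,a) = ∫_X ∫_B Q(C|a,x') P(dx'|x,a) z(dx)` of formula (3.3). -/
noncomputable def Rfun {X Y A : Type*} [MeasurableSpace X] [MeasurableSpace Y]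
    (P : X × A → ProbabilityMeasure X) (Q : A × X → ProbabilityMeasure Y)
    (z : ProbabilityMeasure X) (a : A) (B : Set X) (C : Set Y) : ℝ≥0∞ :=
  ∫⁻ x, (∫⁻ x' in B, ((Q (a, x') : Measure Y) C) ∂((P (x, a) : Measure X))) ∂(z : Measure X)

/-- The marginal observation kernel `R'(dy|z,a)` on `Y` given `P(X)×A`, as a measure. -/
noncomputable def RprimeM {X Y A : Type*} [MeasurableSpace X] [MeasurableSpace Y]
    (P : X × A → ProbabilityMeasure X) (Q : A × X → ProbabilityMeasure Y)
    (z : ProbabilityMeasure X) (a : A) : Measure Y :=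
  ((z : Measure X).bind fun x => (P (x, a) : Measure X)).bind fun x' => (Q (a, x') : Measure Y)

/-- The disintegration identity (3.4). -/
def Disint {X Y A : Type*} [MeasurableSpace X] [MeasurableSpace Y]
    (P : X × A → ProbabilityMeasure X) (Q : A × X → ProbabilityMeasure Y)
    (H : ProbabilityMeasure X × A × Y → ProbabilityMeasure X) : Prop :=
  ∀ (z : ProbabilityMeasure X) (a : A) (B : Set X) (C : Set Y),
    MeasurableSet B → MeasurableSet C →
      Rfun P Q z a B C = ∫⁻ y in C, ((H (z, a, y) : Measure X) B) ∂(RprimeM P Q z a)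

/-- Assumption (H): along any weakly convergent sequence `z⁽ⁿ⁾ → z`, `a⁽ⁿ⁾ → a` there is a
subsequence and a Borel set `C ⊆ Y` of full `R'(·|z,a)`-measure on which
`H(z⁽ⁿᵏ⁾,a⁽ⁿᵏ⁾,y) → H(z,a,y)` weakly. -/
def AssumptionH {X Y A : Type*}
    [MeasurableSpace X] [TopologicalSpace X] [MeasurableSpace Y] [TopologicalSpace A]
    [OpensMeasurableSpace X]
    (P : X × A → ProbabilityMeasure X) (Q : A × X → ProbabilityMeasure Y)
    (H : ProbabilityMeasure X × A × Y → ProbabilityMeasure X) : Prop :=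
  ∀ (zs : ℕ → ProbabilityMeasure X) (z : ProbabilityMeasure X) (as : ℕ → A) (a : A),
    Tendsto zs atTop (𝓝 z) → Tendsto as atTop (𝓝 a) →
    ∃ φ : ℕ → ℕ, StrictMono φ ∧ ∃ C : Set Y, MeasurableSet C ∧
      RprimeM P Q z a C = 1 ∧
      ∀ y ∈ C, Tendsto (fun k => H (zs (φ k), as (φ k), y)) atTop (𝓝 (H (z, a, y)))

/-- The Borel σ-algebra of the weak topology on `P(X)`. -/
noncomputable instance probabilityMeasureMeasurableSpace {X : Type*}
    [MeasurableSpace X] [TopologicalSpace X] [OpensMeasurableSpace X] :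
    MeasurableSpace (ProbabilityMeasure X) := borel _

/-- The transition kernel `q(D|z,a) = ∫_Y 1{H(z,a,y) ∈ D} R'(dy|z,a)` of the COMDP,
i.e. the image of `R'(·|z,a)` under `y ↦ H(z,a,y)`. -/
noncomputable def qker {X Y A : Type*}
    [MeasurableSpace X] [TopologicalSpace X] [OpensMeasurableSpace X] [MeasurableSpace Y]
    (P : X × A → ProbabilityMeasure X) (Q : A × X → ProbabilityMeasure Y)
    (H : ProbabilityMeasure X × A × Y → ProbabilityMeasure X)
    (z : ProbabilityMeasure X) (a : A) : Measure (ProbabilityMeasure X) :=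
  (RprimeM P Q z a).map fun y => H (z, a, y)

namespace MeasureTheory

variable {Y : Type*} [MeasurableSpace Y]

def TendstoSetwise (μs : ℕ → Measure Y) (μ : Measure Y) : Prop :=
  ∀ s, MeasurableSet s → Tendsto (fun n => μs n s) atTop (𝓝 (μ s))

theorem dist_integral_le_of_dist_le_of_dist_le_on_compl {E : Type*} [NormedAddCommGroup E]
    [NormedSpace ℝ E] {ν : Measure Y} [IsFiniteMeasure ν] {u v : Y → E} (hu : Integrable u ν)
    (hv : Integrable v ν) {t : Set Y} (ht : MeasurableSet t) {C δ : ℝ}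
    (hC : ∀ y, dist (u y) (v y) ≤ C) (hδ : ∀ y ∈ tᶜ, dist (u y) (v y) ≤ δ) :
    dist (∫ y, u y ∂ν) (∫ y, v y ∂ν) ≤ C * ν.real t + δ * ν.real tᶜ := by
  rw [dist_eq_norm, ← integral_sub hu hv,
    ← integral_add_compl (f := fun y => u y - v y) ht (hu.sub hv)]
  refine (norm_add_le _ _).trans (add_le_add ?_ ?_) <;>
    refine norm_setIntegral_le_of_norm_le_const (measure_lt_top _ _) fun y hy => ?_ <;>
    simp only [← dist_eq_norm]
  exacts [hC y, hδ y hy]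

namespace TendstoSetwise

variable {μs : ℕ → Measure Y} {μ : Measure Y}
  [∀ n, IsProbabilityMeasure (μs n)] [IsProbabilityMeasure μ]

/-- Via the layer cake formula `∫ h ∂ν = ∫ t in (0, M], ν {t ≤ h}`, this is dominated
convergence on `(0, M]`. -/
theorem tendsto_integral_of_nonneg (hμ : TendstoSetwise μs μ) {h : Y → ℝ} (hm : Measurable h)
    (h0 : ∀ y, 0 ≤ h y) {M : ℝ} (hM : ∀ y, h y ≤ M) :
    Tendsto (fun n => ∫ y, h y ∂μs n) atTop (𝓝 (∫ y, h y ∂μ)) := by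
  have layer_cake : ∀ (ν : Measure Y) [IsProbabilityMeasure ν],
      ∫ y, h y ∂ν = ∫ t in Set.Ioc 0 M, ν.real {y | t ≤ h y} := fun ν _ =>
    (Integrable.of_bound hm.aestronglyMeasurable M (ae_of_all _ fun y => by
      rw [Real.norm_of_nonneg (h0 y)]; exact hM y)).integral_eq_integral_Ioc_meas_le
      (ae_of_all _ h0) (ae_of_all _ hM)
  simp_rw [layer_cake]
  have tail_measurable : ∀ n, Measurable fun t => (μs n).real {y | t ≤ h y} :=
    fun n => Antitone.measurable fun s t hst => measureReal_mono fun y hy => hst.trans hy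
  refine tendsto_integral_of_dominated_convergence (fun _ => (1 : ℝ))
    (fun n => (tail_measurable n).aestronglyMeasurable) (integrableOn_const measure_Ioc_lt_top.ne)
    (fun n => ae_of_all _ fun t => ?_) (ae_of_all _ fun t => ?_)
  · rw [Real.norm_of_nonneg measureReal_nonneg]
    exact measureReal_le_one
  · exact (ENNReal.tendsto_toReal (measure_ne_top _ _)).comp
      (hμ _ (measurableSet_le measurable_const hm))

theorem tendsto_integral (hμ : TendstoSetwise μs μ) {h : Y → ℝ} (hm : Measurable h) {M : ℝ}
    (hM : ∀ y, ‖h y‖ ≤ M) :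
    Tendsto (fun n => ∫ y, h y ∂μs n) atTop (𝓝 (∫ y, h y ∂μ)) := by
  have shift : ∀ (ν : Measure Y) [IsProbabilityMeasure ν],
      ∫ y, (h y + M) ∂ν - M = ∫ y, h y ∂ν := fun ν _ => by
    rw [integral_add (Integrable.of_bound hm.aestronglyMeasurable M (ae_of_all _ hM))
      (integrable_const M), integral_const, probReal_univ, one_smul, add_sub_cancel_right]
  have hbound : ∀ y, -M ≤ h y ∧ h y ≤ M := fun y => abs_le.1 (Real.norm_eq_abs (h y) ▸ hM y)
  have := (hμ.tendsto_integral_of_nonneg (hm.add_const M) (fun y => by linarith [hbound y])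
    (M := M + M) (fun y => by linarith [hbound y])).sub_const M
  simpa only [shift] using this

theorem tendsto_integral_of_ae_tendsto (hμ : TendstoSetwise μs μ) {g : ℕ → Y → ℝ} {G : Y → ℝ}
    (hg : ∀ n, Measurable (g n)) (hG : Measurable G) {M : ℝ} (hgM : ∀ n y, ‖g n y‖ ≤ M)
    (hGM : ∀ y, ‖G y‖ ≤ M) (hlim : ∀ᵐ y ∂μ, Tendsto (fun n => g n y) atTop (𝓝 (G y))) :
    Tendsto (fun n => ∫ y, g n y ∂μs n) atTop (𝓝 (∫ y, G y ∂μ)) := by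
  suffices Tendsto (fun n => ∫ y, g n y ∂μs n - ∫ y, G y ∂μs n) atTop (𝓝 0) by
    simpa using this.add (hμ.tendsto_integral hG hGM)
  refine Metric.tendsto_nhds.2 fun ε hε => ?_
  set δ := ε / (8 * (|M| + 1)) with hδ_def
  have hδ : 0 < δ := by positivity
  have hMδ : 2 * |M| * (2 * δ) ≤ ε / 2 := by
    rw [hδ_def, show 2 * |M| * (2 * (ε / (8 * (|M| + 1)))) = ε / 2 * (|M| / (|M| + 1)) by
      field_simp; ring]
    exact mul_le_of_le_one_right (by positivity) ((div_le_one (by positivity)).2 (by linarith))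
  obtain ⟨t, ht, hμt, hunif⟩ := tendstoUniformlyOn_of_ae_tendsto'
    (fun n => (hg n).stronglyMeasurable) hG.stronglyMeasurable hlim hδ
  have small_on_t : ∀ᶠ n in atTop, (μs n).real t < 2 * δ :=
    ((hμ t ht).eventually_lt_const (hμt.trans_lt ((ENNReal.ofReal_lt_ofReal_iff (by positivity)).2
      (by linarith)))).mono fun n hn => ENNReal.toReal_lt_of_lt_ofReal hn
  have close_off_t : ∀ᶠ n in atTop, ∀ y ∈ tᶜ, dist (g n y) (G y) ≤ ε / 4 :=
    (Metric.tendstoUniformlyOn_iff.1 hunif (ε / 4) (by positivity)).mono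
      fun n hn y hy => (dist_comm (G y) (g n y) ▸ hn y hy).le
  filter_upwards [small_on_t, close_off_t] with n hn_t hn_tc
  rw [dist_zero_right, ← dist_eq_norm]
  calc dist (∫ y, g n y ∂μs n) (∫ y, G y ∂μs n)
      ≤ (M + M) * (μs n).real t + ε / 4 * (μs n).real tᶜ :=
        dist_integral_le_of_dist_le_of_dist_le_on_compl
          (Integrable.of_bound (hg n).aestronglyMeasurable M (ae_of_all _ (hgM n)))
          (Integrable.of_bound hG.aestronglyMeasurable M (ae_of_all _ hGM)) ht
          (fun y => (dist_le_norm_add_norm _ _).trans (add_le_add (hgM n y) (hGM y))) hn_tc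
    _ ≤ 2 * |M| * (2 * δ) + ε / 4 * 1 := by
        gcongr
        · nlinarith [le_abs_self M, abs_nonneg M, measureReal_nonneg (μ := μs n) (s := t)]
        · exact measureReal_le_one
    _ < ε := by linarith

end TendstoSetwise

end MeasureTheory

section ObservationKernels

variable {X Y A : Type*} [MeasurableSpace X] [MeasurableSpace Y]

theorem isProbabilityMeasure_RprimeM [MeasurableSpace A] {P : X × A → ProbabilityMeasure X}
    {Q : A × X → ProbabilityMeasure Y} (hP : Measurable fun p => (P p : Measure X))
    (hQ : Measurable fun p => (Q p : Measure Y)) (z : ProbabilityMeasure X) (a : A) :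
    IsProbabilityMeasure (RprimeM P Q z a) :=
  have : IsProbabilityMeasure ((z : Measure X).bind fun x => (P (x, a) : Measure X)) :=
    isProbabilityMeasure_bind (hP.comp measurable_prodMk_right).aemeasurable
      (ae_of_all _ inferInstance)
  isProbabilityMeasure_bind (hQ.comp measurable_prodMk_left).aemeasurable
    (ae_of_all _ inferInstance)

variable [TopologicalSpace X] [OpensMeasurableSpace X]

instance ProbabilityMeasure.borelSpace : BorelSpace (ProbabilityMeasure X) := ⟨rfl⟩

variable [MeasurableSpace A]

theorem integral_qker {P : X × A → ProbabilityMeasure X} {Q : A × X → ProbabilityMeasure Y}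
    {H : ProbabilityMeasure X × A × Y → ProbabilityMeasure X} (hH : Measurable H)
    {f : ProbabilityMeasure X → ℝ} (hf : Measurable f) (z : ProbabilityMeasure X) (a : A) :
    ∫ ζ, f ζ ∂(qker P Q H z a) = ∫ y, f (H (z, a, y)) ∂(RprimeM P Q z a) :=
  integral_map (hH.comp (by fun_prop)).aemeasurable hf.aestronglyMeasurable

end ObservationKernels

theorem qker_weakly_continuous_of_setwise_and_assumptionH_general {X Y A : Type*}
    [MetricSpace X] [MeasurableSpace X] [BorelSpace X]
    [MeasurableSpace Y]
    [MetricSpace A] [MeasurableSpace A]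
    (P : X × A → ProbabilityMeasure X) (Q : A × X → ProbabilityMeasure Y)
    (hPmeas : Measurable fun p => (P p : Measure X))
    (hQmeas : Measurable fun p => (Q p : Measure Y))
    (hR'setwise : ∀ (zs : ℕ → ProbabilityMeasure X) (z : ProbabilityMeasure X)
        (as : ℕ → A) (a : A),
      Tendsto zs atTop (𝓝 z) → Tendsto as atTop (𝓝 a) →
      ∀ C : Set Y, MeasurableSet C →
        Tendsto (fun n => RprimeM P Q (zs n) (as n) C) atTop (𝓝 (RprimeM P Q z a C)))
    (H : ProbabilityMeasure X × A × Y → ProbabilityMeasure X)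
    (hHmeas : Measurable H)
    (hH : AssumptionH P Q H) :
    ∀ (zs : ℕ → ProbabilityMeasure X) (z : ProbabilityMeasure X) (as : ℕ → A) (a : A),
      Tendsto zs atTop (𝓝 z) → Tendsto as atTop (𝓝 a) →
      ∀ f : BoundedContinuousFunction (ProbabilityMeasure X) ℝ,
        Tendsto (fun n => ∫ ζ, f ζ ∂(qker P Q H (zs n) (as n))) atTop
          (𝓝 (∫ ζ, f ζ ∂(qker P Q H z a))) := by
  intro zs z as a hz ha f
  have := isProbabilityMeasure_RprimeM hPmeas hQmeas
  simp only [integral_qker hHmeas f.continuous.measurable]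
  refine tendsto_of_subseq_tendsto fun ns hns => ?_
  obtain ⟨φ, hφ, C, hC, hC_full, hC_conv⟩ := hH _ z _ a (hz.comp hns) (ha.comp hns)
  have hnsφ := hns.comp hφ.tendsto_atTop
  refine ⟨φ, TendstoSetwise.tendsto_integral_of_ae_tendsto
    (hR'setwise _ z _ a (hz.comp hnsφ) (ha.comp hnsφ))
    (fun n => f.continuous.measurable.comp (hHmeas.comp (by fun_prop)))
    (f.continuous.measurable.comp (hHmeas.comp (by fun_prop)))
    (fun n y => f.norm_coe_le_norm _) (fun y => f.norm_coe_le_norm _) ?_⟩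
  filter_upwards [(ae_mem_iff_measure_eq hC.nullMeasurableSet).2 (by rw [hC_full, measure_univ])]
    with y hy
  exact (f.continuous.tendsto _).comp (hC_conv y hy)

/-- **Theorem (weak continuity of `q` under setwise continuity of `R'` and Assumption (H)).**
If the kernel `R'(dy|z,a)` is setwise continuous and `H` is a stochastic kernel satisfying
the disintegration identity (3.4) and Assumption (H), then the kernel `q` on `P(X)` given
`P(X)×A` is weakly continuous. -/
theorem qker_weakly_continuous_of_setwise_and_assumptionH {X Y A : Type*}
    [MetricSpace X] [SecondCountableTopology X] [MeasurableSpace X] [BorelSpace X]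
    [MetricSpace Y] [SecondCountableTopology Y] [MeasurableSpace Y] [BorelSpace Y]
    [MetricSpace A] [SecondCountableTopology A] [MeasurableSpace A] [BorelSpace A]
    (P : X × A → ProbabilityMeasure X) (Q : A × X → ProbabilityMeasure Y)
    (hPmeas : Measurable fun p => (P p : Measure X))
    (hQmeas : Measurable fun p => (Q p : Measure Y))
    (hR'setwise : ∀ (zs : ℕ → ProbabilityMeasure X) (z : ProbabilityMeasure X)
        (as : ℕ → A) (a : A),
      Tendsto zs atTop (𝓝 z) → Tendsto as atTop (𝓝 a) →
      ∀ C : Set Y, MeasurableSet C →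
        Tendsto (fun n => RprimeM P Q (zs n) (as n) C) atTop (𝓝 (RprimeM P Q z a C)))
    (H : ProbabilityMeasure X × A × Y → ProbabilityMeasure X)
    (hHmeas : Measurable H)
    (hHdis : Disint P Q H)
    (hH : AssumptionH P Q H) :
    ∀ (zs : ℕ → ProbabilityMeasure X) (z : ProbabilityMeasure X) (as : ℕ → A) (a : A),
      Tendsto zs atTop (𝓝 z) → Tendsto as atTop (𝓝 a) →
      ∀ f : BoundedContinuousFunction (ProbabilityMeasure X) ℝ,
        Tendsto (fun n => ∫ ζ, f ζ ∂(qker P Q H (zs n) (as n))) atTop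
          (𝓝 (∫ ζ, f ζ ∂(qker P Q H z a))) :=
  qker_weakly_continuous_of_setwise_and_assumptionH_general P Q hPmeas hQmeas hR'setwise H hHmeas hH
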